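/- Let A(w)(z) denote a smooth map ℝᵈ × ℝᵈ → M_N(ℝ) that is linear in z (a smooth matrix-valued linear-in-direction family), and consider the matrix ODE (d/dt) Ψ(tz) + A(tz)(z) · Ψ(tz) = 0 along rays t ↦ tz with Ψ(0) = I. Then the solution satisfies the second-order Taylor expansion Ψ(z) = I − Σⱼ zⱼ Aⱼ(0) + ½ Σ_{i,j} zᵢzⱼ Aⱼ(0)Aᵢ(0) − ½ Σ_{i,j} zᵢzⱼ ∂ᵢAⱼ(0) + O(|z|³), where Aⱼ(w) = A(w)(eⱼ). -/

import Mathlib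

open Asymptotics

namespace RayODEAux

open ContDiff
set_option synthInstance.maxHeartbeats 1000000
set_option maxHeartbeats 1000000

theorem isBigO_pow_succ_of_fderiv {E G : Type*} [NormedAddCommGroup E] [NormedSpace ℝ E]
    [NormedAddCommGroup G] [NormedSpace ℝ G]
    {f : E → G} (hf : Differentiable ℝ f) (h0 : f 0 = 0) {n : ℕ}
    (hd : (fun w => fderiv ℝ f w) =O[nhds 0] fun w => ‖w‖ ^ n) :
    f =O[nhds 0] fun z => ‖z‖ ^ (n + 1) := by
  obtain ⟨C, hC⟩ := hd.bound
  rw [Metric.eventually_nhds_iff] at hC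
  obtain ⟨r, hr, hball⟩ := hC
  set C' := max C 0 with hC'
  have hC'0 : 0 ≤ C' := le_max_right _ _
  rw [isBigO_iff]
  refine ⟨C', Metric.eventually_nhds_iff.2 ⟨r, hr, fun {z} hz => ?_⟩⟩
  have hzr : ‖z‖ < r := by simpa [dist_eq_norm] using hz
  have key : ‖f z - f 0‖ ≤ C' * ‖z‖ ^ n * ‖z - 0‖ := by
    apply Convex.norm_image_sub_le_of_norm_fderiv_le
      (fun x _ => hf.differentiableAt) ?_ (convex_closedBall (0 : E) ‖z‖) ?_ ?_
    · intro x hx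
      have hx' : ‖x‖ ≤ ‖z‖ := by simpa [dist_eq_norm] using hx
      have h1 : ‖fderiv ℝ f x‖ ≤ C * ‖x‖ ^ n := by
        simpa [dist_eq_norm, abs_of_nonneg (pow_nonneg (norm_nonneg x) n)] using
          hball (show dist x 0 < r by rw [dist_eq_norm, sub_zero]; exact lt_of_le_of_lt hx' hzr)
      calc ‖fderiv ℝ f x‖ ≤ C * ‖x‖ ^ n := h1
        _ ≤ C' * ‖x‖ ^ n :=
            mul_le_mul_of_nonneg_right (le_max_left _ _) (by positivity)
        _ ≤ C' * ‖z‖ ^ n :=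
            mul_le_mul_of_nonneg_left (pow_le_pow_left₀ (norm_nonneg x) hx' n) hC'0
    · simp [Metric.mem_closedBall]
    · simp [Metric.mem_closedBall]
  rw [h0, sub_zero, sub_zero] at key
  calc ‖f z‖ ≤ C' * ‖z‖ ^ n * ‖z‖ := key
    _ = C' * ‖z‖ ^ (n + 1) := by ring
    _ ≤ C' * ‖‖z‖ ^ (n + 1)‖ := by
        apply mul_le_mul_of_nonneg_left _ hC'0
        simp [abs_of_nonneg (pow_nonneg (norm_nonneg z) _)]

/-- If `f` is `C^∞`, `f 0 = 0`, `fderiv f 0 = 0`, and `fderiv (fderiv f) 0 = 0`,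
then `f = O(‖z‖^3)` at `0`. -/
theorem isBigO_cube_of_jets {E G : Type*} [NormedAddCommGroup E] [NormedSpace ℝ E]
    [NormedAddCommGroup G] [NormedSpace ℝ G]
    {f : E → G} (hf : ContDiff ℝ ∞ f) (h0 : f 0 = 0)
    (h1 : fderiv ℝ f 0 = 0) (h2 : fderiv ℝ (fderiv ℝ f) 0 = 0) :
    f =O[nhds 0] fun z => ‖z‖ ^ 3 := by
  have hfN : ContDiff ℝ ∞ f := hf
  have hf1 : ContDiff ℝ ∞ (fderiv ℝ f) := (contDiff_infty_iff_fderiv.1 hfN).2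
  have hf2 : ContDiff ℝ ∞ (fderiv ℝ (fderiv ℝ f)) := (contDiff_infty_iff_fderiv.1 hf1).2
  have o1 : (fun w => fderiv ℝ (fderiv ℝ f) w) =O[nhds 0] fun w => ‖w‖ ^ 1 := by
    have hb := ((hf2.differentiable (by simp)) 0).isBigO_sub
    have : (fun w => fderiv ℝ (fderiv ℝ f) w) =O[nhds 0] fun w => w - 0 := by
      refine hb.congr' ?_ (by filter_upwards with w using rfl)
      filter_upwards with w; rw [h2, sub_zero]
    simpa using this.norm_right
  have o2 : (fun w => fderiv ℝ f w) =O[nhds 0] fun w => ‖w‖ ^ 2 :=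
    isBigO_pow_succ_of_fderiv (hf1.differentiable (by simp)) h1 o1
  exact isBigO_pow_succ_of_fderiv (hfN.differentiable (by simp)) h0 o2

variable {d N : ℕ}
  (A : (Fin d → ℝ) → (Fin d → ℝ) →ₗ[ℝ] (Fin N → Fin N → ℝ))
  (hA : ContDiff ℝ (⊤ : ℕ∞) (fun p : (Fin d → ℝ) × (Fin d → ℝ) => A p.1 p.2))
  (Ψ : (Fin d → ℝ) → (Fin N → Fin N → ℝ)) (hΨ : ContDiff ℝ (⊤ : ℕ∞) Ψ)
  (hΨ0 : Ψ 0 = fun i j => if i = j then (1 : ℝ) else 0)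
  (hODE : ∀ (z : Fin d → ℝ) (t : ℝ),
      deriv (fun t => Ψ (t • z)) t +
        (fun i j => ∑ k, A (t • z) z i k * Ψ (t • z) k j) = 0)

section
include hΨ
lemma hray (z : Fin d → ℝ) (t : ℝ) :
    HasDerivAt (fun s : ℝ => Ψ (s • z)) (fderiv ℝ Ψ (t • z) z) t := by
  have h1 : HasDerivAt (fun s : ℝ => s • z) z t := by
    simpa using (hasDerivAt_id t).smul_const z
  exact (hΨ.differentiable (by simp) (t • z)).hasFDerivAt.comp_hasDerivAt t h1

include hODE
lemma stepA (z : Fin d → ℝ) (t : ℝ) :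
    fderiv ℝ Ψ (t • z) z = -(fun i j => ∑ k, A (t • z) z i k * Ψ (t • z) k j) := by
  have h := hODE z t
  rw [(hray Ψ hΨ z t).deriv] at h
  exact eq_neg_of_add_eq_zero_left h

include hΨ0
lemma stepA0 (z : Fin d → ℝ) :
    fderiv ℝ Ψ 0 z = -(A 0 z) := by
  have h := stepA A Ψ hΨ hODE z 0
  rw [zero_smul] at h
  rw [h, hΨ0]
  funext i j
  simp [mul_ite]
end

section
include hA
lemma hAs : ContDiff ℝ (⊤ : ℕ∞) (fun w => (A w).toContinuousLinearMap :
    (Fin d → ℝ) → (Fin d → ℝ) →L[ℝ] (Fin N → Fin N → ℝ)) := by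
  rw [contDiff_clm_apply_iff]
  intro y
  have : ContDiff ℝ (⊤ : ℕ∞) (fun w : Fin d → ℝ => (w, y)) := contDiff_id.prodMk contDiff_const
  simpa [Function.comp_def] using hA.comp this

lemma identI (y v : Fin d → ℝ) :
    fderiv ℝ (fun w => A w y) 0 v =
      fderiv ℝ (fun w => (A w).toContinuousLinearMap) 0 v y := by
  have hd : DifferentiableAt ℝ (fun w => (A w).toContinuousLinearMap :
      (Fin d → ℝ) → (Fin d → ℝ) →L[ℝ] (Fin N → Fin N → ℝ)) 0 :=
    (hAs A hA).differentiable (by simp) 0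
  have hcomp : HasFDerivAt (fun w => A w y)
      ((ContinuousLinearMap.apply ℝ (Fin N → Fin N → ℝ) y).comp
        (fderiv ℝ (fun w => (A w).toContinuousLinearMap) 0)) 0 := by
    have := ((ContinuousLinearMap.apply ℝ (Fin N → Fin N → ℝ) y).hasFDerivAt).comp 0
      hd.hasFDerivAt
    simpa using this
  rw [hcomp.fderiv]
  rfl
end


/-- Matrix multiplication on `Fin N → Fin N → ℝ` as a continuous bilinear map. -/
noncomputable def matmulCLM (N : ℕ) :
    (Fin N → Fin N → ℝ) →L[ℝ] (Fin N → Fin N → ℝ) →L[ℝ] (Fin N → Fin N → ℝ) :=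
  LinearMap.toContinuousLinearMap <|
    ((LinearMap.toContinuousLinearMap :
        ((Fin N → Fin N → ℝ) →ₗ[ℝ] (Fin N → Fin N → ℝ)) ≃ₗ[ℝ] _).toLinearMap).comp <|
      LinearMap.mk₂ ℝ (fun X Y i j => ∑ k, X i k * Y k j)
        (fun X X' Y => by funext i j; simp [add_mul, Finset.sum_add_distrib])
        (fun c X Y => by funext i j; simp [Finset.mul_sum, mul_assoc])
        (fun X Y Y' => by funext i j; simp [mul_add, Finset.sum_add_distrib])
        (fun c X Y => by
          funext i j
          simp [Finset.mul_sum]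
          exact Finset.sum_congr rfl fun k _ => by ring)

@[simp] lemma matmulCLM_apply (X Y : Fin N → Fin N → ℝ) (i j : Fin N) :
    matmulCLM N X Y i j = ∑ k, X i k * Y k j := rfl

lemma matmulCLM_one (X : Fin N → Fin N → ℝ) :
    matmulCLM N X (fun i j => if i = j then (1:ℝ) else 0) = X := by
  funext i j
  simp [matmulCLM_apply, mul_ite]
section
include hA hΨ hΨ0 hODE

lemma stepB (z : Fin d → ℝ) :
    fderiv ℝ (fderiv ℝ Ψ) 0 z z =
      matmulCLM N (A 0 z) (A 0 z) - fderiv ℝ (fun w => (A w).toContinuousLinearMap) 0 z z := by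
  classical
  have h0z : (0:ℝ) • z = 0 := zero_smul ℝ z
  set DA := fderiv ℝ (fun w => (A w).toContinuousLinearMap :
      (Fin d → ℝ) → (Fin d → ℝ) →L[ℝ] (Fin N → Fin N → ℝ)) 0 with hDA
  have hΨ1 : ContDiff ℝ ∞ (fderiv ℝ Ψ) :=
    (contDiff_infty_iff_fderiv.1 (hΨ.of_le (by simp))).2
  have hline : HasDerivAt (fun s : ℝ => s • z) z 0 := by
    simpa using (hasDerivAt_id (0:ℝ)).smul_const z
  -- LHS derivative
  have hev : HasFDerivAt (fun w => fderiv ℝ Ψ w z)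
      ((ContinuousLinearMap.apply ℝ (Fin N → Fin N → ℝ) z).comp (fderiv ℝ (fderiv ℝ Ψ) 0))
      ((0:ℝ) • z) := by
    rw [h0z]
    have := ((ContinuousLinearMap.apply ℝ (Fin N → Fin N → ℝ) z).hasFDerivAt).comp 0
      ((hΨ1.differentiable (by simp)) 0).hasFDerivAt
    simpa using this
  have hu : HasDerivAt (fun t : ℝ => fderiv ℝ Ψ (t • z) z)
      (fderiv ℝ (fderiv ℝ Ψ) 0 z z) 0 := by
    have h := hev.comp_hasDerivAt 0 hline
    simpa [Function.comp_def] using h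
  -- RHS derivative
  have ha : HasDerivAt (fun t : ℝ => (A (t • z)).toContinuousLinearMap) (DA z) 0 := by
    have hfd : HasFDerivAt (fun w => (A w).toContinuousLinearMap :
        (Fin d → ℝ) → (Fin d → ℝ) →L[ℝ] (Fin N → Fin N → ℝ)) DA ((0:ℝ) • z) := by
      rw [h0z]; exact ((hAs A hA).differentiable (by simp) 0).hasFDerivAt
    exact hfd.comp_hasDerivAt 0 hline
  have hb : HasDerivAt (fun t : ℝ => Ψ (t • z)) (fderiv ℝ Ψ 0 z) 0 := by
    have := hray Ψ hΨ z 0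
    rwa [h0z] at this
  have hc : HasDerivAt (fun t : ℝ => matmulCLM N ((A (t • z)).toContinuousLinearMap z))
      (matmulCLM N (DA z z)) 0 := by
    have h1 : HasDerivAt (fun t : ℝ => (A (t • z)).toContinuousLinearMap z) (DA z z) 0 := by
      have := ((ContinuousLinearMap.apply ℝ (Fin N → Fin N → ℝ) z).hasFDerivAt
        (x := (A ((0:ℝ) • z)).toContinuousLinearMap)).comp_hasDerivAt 0 ha
      simpa [Function.comp_def] using this
    have := ((matmulCLM N).hasFDerivAt
      (x := (A ((0:ℝ) • z)).toContinuousLinearMap z)).comp_hasDerivAt 0 h1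
    simpa [Function.comp_def] using this
  have hv : HasDerivAt
      (fun t : ℝ => -(matmulCLM N ((A (t • z)).toContinuousLinearMap z) (Ψ (t • z))))
      (-(matmulCLM N (DA z z) (Ψ 0)
        + matmulCLM N ((A ((0:ℝ) • z)).toContinuousLinearMap z) (fderiv ℝ Ψ 0 z))) 0 := by
    have := (hc.clm_apply hb).neg
    simpa [h0z, Function.comp_def, Pi.neg_def] using this
  have huv : (fun t : ℝ => fderiv ℝ Ψ (t • z) z)
      = fun t : ℝ => -(matmulCLM N ((A (t • z)).toContinuousLinearMap z) (Ψ (t • z))) := by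
    funext t
    rw [stepA A Ψ hΨ hODE z t]
    rfl
  rw [huv] at hu
  have hkey := hu.unique hv
  rw [hkey, hΨ0, stepA0 A Ψ hΨ hΨ0 hODE z, matmulCLM_one, map_neg, h0z]
  simp only [LinearMap.coe_toContinuousLinearMap']
  abel

end

section Pside
/-- The candidate second-derivative bilinear map. -/
noncomputable def Tmap : (Fin d → ℝ) →L[ℝ] (Fin d → ℝ) →L[ℝ] (Fin N → Fin N → ℝ) :=
  letI Λ := (A 0).toContinuousLinearMap
  letI R := ((ContinuousLinearMap.compL ℝ (Fin d → ℝ) (Fin N → Fin N → ℝ)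
      (Fin N → Fin N → ℝ)).flip Λ).comp ((matmulCLM N).comp Λ)
  letI DA := fderiv ℝ (fun w => (A w).toContinuousLinearMap :
      (Fin d → ℝ) → (Fin d → ℝ) →L[ℝ] (Fin N → Fin N → ℝ)) 0
  (2⁻¹ : ℝ) • (R + R.flip - (DA + DA.flip))

lemma Tmap_apply (z w : Fin d → ℝ) :
    Tmap A z w = (2⁻¹ : ℝ) •
      (matmulCLM N (A 0 z) (A 0 w) + matmulCLM N (A 0 w) (A 0 z)
        - (fderiv ℝ (fun w => (A w).toContinuousLinearMap) 0 z w
           + fderiv ℝ (fun w => (A w).toContinuousLinearMap) 0 w z)) := by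
  simp [Tmap, ContinuousLinearMap.smul_apply, ContinuousLinearMap.add_apply,
    ContinuousLinearMap.sub_apply, ContinuousLinearMap.flip_apply,
    ContinuousLinearMap.comp_apply, ContinuousLinearMap.compL_apply]

lemma Tmap_symm (z w : Fin d → ℝ) : Tmap A z w = Tmap A w z := by
  rw [Tmap_apply, Tmap_apply]
  congr 1
  abel

lemma Tmap_diag (z : Fin d → ℝ) :
    Tmap A z z = matmulCLM N (A 0 z) (A 0 z)
      - fderiv ℝ (fun w => (A w).toContinuousLinearMap) 0 z z := by
  rw [Tmap_apply]
  set a := matmulCLM N (A 0 z) (A 0 z)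
  set b := fderiv ℝ (fun w => (A w).toContinuousLinearMap :
      (Fin d → ℝ) → (Fin d → ℝ) →L[ℝ] (Fin N → Fin N → ℝ)) 0 z z
  have : a + a - (b + b) = (2:ℝ) • (a - b) := by
    rw [two_smul]; abel
  rw [this, smul_smul]
  norm_num

lemma hPderiv (w : Fin d → ℝ) :
    HasFDerivAt (fun z => Ψ 0 - (A 0).toContinuousLinearMap z + (2⁻¹:ℝ) • (Tmap A z z))
      (-(A 0).toContinuousLinearMap + (2⁻¹:ℝ) • ((Tmap A) w + (Tmap A).flip w)) w := by
  have hq : HasFDerivAt (fun z : Fin d → ℝ => Tmap A z z) ((Tmap A) w + (Tmap A).flip w) w := by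
    have hb := (Tmap A).isBoundedBilinearMap
    have hd : HasFDerivAt (fun z : Fin d → ℝ => (z, z))
        ((ContinuousLinearMap.id ℝ (Fin d → ℝ)).prod (ContinuousLinearMap.id ℝ (Fin d → ℝ))) w :=
      ((ContinuousLinearMap.id ℝ (Fin d → ℝ)).prod
        (ContinuousLinearMap.id ℝ (Fin d → ℝ))).hasFDerivAt
    have h2 : HasFDerivAt (fun p : (Fin d → ℝ) × (Fin d → ℝ) => Tmap A p.1 p.2)
        (hb.deriv (w, w)) ((fun z : Fin d → ℝ => (z, z)) w) := hb.hasFDerivAt (w, w)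
    have := HasFDerivAt.comp (f := fun z : Fin d → ℝ => (z, z)) w h2 hd
    convert this using 1 <;> try rfl
  have hlin : HasFDerivAt (fun z : Fin d → ℝ => Ψ 0 - (A 0).toContinuousLinearMap z)
      (-(A 0).toContinuousLinearMap) w := by
    simpa using (hasFDerivAt_const (Ψ 0) w).sub ((A 0).toContinuousLinearMap.hasFDerivAt)
  exact hlin.add (hq.const_smul (2⁻¹:ℝ))
end Pside

section snd
include hA hΨ hΨ0 hODE

lemma sndPsi : fderiv ℝ (fderiv ℝ Ψ) 0 = Tmap A := by
  have hsym : IsSymmSndFDerivAt ℝ Ψ 0 := (hΨ.contDiffAt).isSymmSndFDerivAt (by rw [minSmoothness_of_isRCLikeNormedField]; exact WithTop.coe_le_coe.2 le_top)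
  have hdiag : ∀ v, fderiv ℝ (fderiv ℝ Ψ) 0 v v = Tmap A v v := fun v => by
    rw [stepB A hA Ψ hΨ hΨ0 hODE v, Tmap_diag]
  ext z w
  have e := hdiag (z + w)
  simp only [map_add, ContinuousLinearMap.add_apply] at e
  rw [hdiag z, hdiag w] at e
  have e2 : fderiv ℝ (fderiv ℝ Ψ) 0 z w + fderiv ℝ (fderiv ℝ Ψ) 0 w z
      = Tmap A z w + Tmap A w z := by
    rw [← sub_eq_zero] at e ⊢
    rw [← e]
    abel
  rw [hsym w z, Tmap_symm A w z] at e2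
  have h2 : (2:ℝ) • fderiv ℝ (fderiv ℝ Ψ) 0 z w = (2:ℝ) • Tmap A z w := by
    rw [two_smul, two_smul]; exact e2
  have := smul_right_injective (Fin N → Fin N → ℝ) (two_ne_zero (α := ℝ)) h2
  exact congrFun (congrFun this _) _

end snd

section sums
lemma A_zero_rep (z : Fin d → ℝ) :
    A 0 z = ∑ j', z j' • A 0 (Pi.single j' 1) := by
  conv_lhs => rw [pi_eq_sum_univ z]
  rw [map_sum]
  refine Finset.sum_congr rfl fun j' _ => ?_
  rw [map_smul]
  have : (Pi.single j' (1:ℝ) : Fin d → ℝ) = fun j => if j' = j then 1 else 0 := by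
    funext j
    simp [Pi.single_apply, eq_comm]
  rw [this]

lemma rep1 (z : Fin d → ℝ) (i j : Fin N) :
    ∑ j', z j' * A 0 (Pi.single j' 1) i j = A 0 z i j := by
  rw [A_zero_rep A z]
  rw [Finset.sum_apply, Finset.sum_apply]
  simp

lemma rep2 (z : Fin d → ℝ) (i j : Fin N) :
    matmulCLM N (A 0 z) (A 0 z) i j
      = ∑ i', ∑ j', z i' * z j' *
          ∑ k, A 0 (Pi.single j' 1) i k * A 0 (Pi.single i' 1) k j := by
  rw [matmulCLM_apply]
  have h : ∀ a b : Fin N, A 0 z a b = ∑ j', z j' * A 0 (Pi.single j' 1) a b :=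
    fun a b => (rep1 A z a b).symm
  calc ∑ k, A 0 z i k * A 0 z k j
      = ∑ k, ∑ j', ∑ i', (z j' * A 0 (Pi.single j' 1) i k) * (z i' * A 0 (Pi.single i' 1) k j) := by
        refine Finset.sum_congr rfl fun k _ => ?_
        rw [h i k, h k j, Finset.sum_mul_sum]
    _ = ∑ j', ∑ i', ∑ k, (z j' * A 0 (Pi.single j' 1) i k) * (z i' * A 0 (Pi.single i' 1) k j) := by
        rw [Finset.sum_comm]
        refine Finset.sum_congr rfl fun j' _ => Finset.sum_comm
    _ = ∑ i', ∑ j', z i' * z j' * ∑ k, A 0 (Pi.single j' 1) i k * A 0 (Pi.single i' 1) k j := by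
        rw [Finset.sum_comm]
        refine Finset.sum_congr rfl fun i' _ => Finset.sum_congr rfl fun j' _ => ?_
        rw [Finset.mul_sum]
        refine Finset.sum_congr rfl fun k _ => by ring

include hA in
lemma rep3 (z : Fin d → ℝ) (i j : Fin N) :
    fderiv ℝ (fun w => (A w).toContinuousLinearMap) 0 z z i j
      = ∑ i', ∑ j', z i' * z j' *
          fderiv ℝ (fun w => A w (Pi.single j' 1)) 0 (Pi.single i' 1) i j := by
  set DA := fderiv ℝ (fun w => (A w).toContinuousLinearMap :
      (Fin d → ℝ) → (Fin d → ℝ) →L[ℝ] (Fin N → Fin N → ℝ)) 0 with hDA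
  have hz : z = ∑ i', z i' • (Pi.single i' (1:ℝ) : Fin d → ℝ) := by
    conv_lhs => rw [pi_eq_sum_univ z]
    refine Finset.sum_congr rfl fun i' _ => ?_
    congr 1
    funext j'
    simp [Pi.single_apply, eq_comm]
  have key : DA z z = ∑ i', ∑ j', (z i' * z j') • DA (Pi.single i' 1) (Pi.single j' 1) := by
    have inner : ∀ u : Fin d → ℝ, DA u z = ∑ j', z j' • DA u (Pi.single j' 1) := by
      intro u
      conv_lhs => rw [hz]
      rw [map_sum]
      refine Finset.sum_congr rfl fun j' _ => map_smul _ _ _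
    have outer : ∀ v : Fin d → ℝ, DA z v = ∑ i', z i' • DA (Pi.single i' 1) v := by
      intro v
      conv_lhs => rw [hz]
      rw [map_sum, ContinuousLinearMap.sum_apply]
      refine Finset.sum_congr rfl fun i' _ => ?_
      rw [map_smul, ContinuousLinearMap.smul_apply]
    rw [inner z]
    have hterm : ∀ j', z j' • DA z (Pi.single j' 1)
        = ∑ i', (z i' * z j') • DA (Pi.single i' 1) (Pi.single j' 1) := by
      intro j'
      rw [outer (Pi.single j' 1), Finset.smul_sum]
      refine Finset.sum_congr rfl fun i' _ => ?_
      rw [smul_smul, mul_comm]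
    rw [Finset.sum_congr rfl fun j' _ => hterm j']
    exact Finset.sum_comm
  calc DA z z i j
      = (∑ i', ∑ j', (z i' * z j') • DA (Pi.single i' 1) (Pi.single j' 1)) i j := by
        rw [key]
    _ = ∑ i', ∑ j', z i' * z j' * DA (Pi.single i' 1) (Pi.single j' 1) i j := by
        rw [Finset.sum_apply, Finset.sum_apply]
        refine Finset.sum_congr rfl fun i' _ => ?_
        rw [Finset.sum_apply, Finset.sum_apply]
        refine Finset.sum_congr rfl fun j' _ => by simp
    _ = _ := by
        refine Finset.sum_congr rfl fun i' _ => Finset.sum_congr rfl fun j' _ => ?_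
        rw [identI A hA]
end sums

section final
include hA hΨ hΨ0 hODE

theorem rayODE_taylor_two' :
    (fun z : Fin d → ℝ => Ψ z - fun i j =>
        (if i = j then (1 : ℝ) else 0)
          - ∑ j', z j' * A 0 (Pi.single j' 1) i j
          + (1 / 2) * ∑ i', ∑ j', z i' * z j' *
              ∑ k, A 0 (Pi.single j' 1) i k * A 0 (Pi.single i' 1) k j
          - (1 / 2) * ∑ i', ∑ j', z i' * z j' *
              fderiv ℝ (fun w => A w (Pi.single j' 1)) 0 (Pi.single i' 1) i j)
      =O[nhds 0] fun z => ‖z‖ ^ 3 := by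
  classical
  set Λ := (A 0).toContinuousLinearMap with hΛ
  set P : (Fin d → ℝ) → (Fin N → Fin N → ℝ) :=
    fun z => Ψ 0 - Λ z + (2⁻¹:ℝ) • (Tmap A z z) with hP
  have hΨdiff : Differentiable ℝ Ψ := hΨ.differentiable (by simp)
  have hΨ1 : ContDiff ℝ ∞ (fderiv ℝ Ψ) := (contDiff_infty_iff_fderiv.1 (hΨ.of_le (by simp))).2
  have hfdΨ0 : fderiv ℝ Ψ 0 = -Λ := by
    apply ContinuousLinearMap.ext; intro z
    rw [stepA0 A Ψ hΨ hΨ0 hODE z]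
    simp [hΛ]
  have hPd : ∀ w, HasFDerivAt P (-Λ + (2⁻¹:ℝ) • ((Tmap A) w + (Tmap A).flip w)) w :=
    fun w => hPderiv A Ψ w
  have hfdP : fderiv ℝ P = fun w => -Λ + ((2⁻¹:ℝ) • (Tmap A + (Tmap A).flip)) w := by
    funext w
    rw [(hPd w).fderiv]
    simp only [ContinuousLinearMap.smul_apply, ContinuousLinearMap.add_apply]
  have hsndP : fderiv ℝ (fderiv ℝ P) 0 = Tmap A := by
    rw [hfdP]
    have haff : HasFDerivAt (fun w => -Λ + ((2⁻¹:ℝ) • (Tmap A + (Tmap A).flip)) w)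
        ((2⁻¹:ℝ) • (Tmap A + (Tmap A).flip)) 0 := by
      simpa [Pi.add_def, Pi.smul_def] using (hasFDerivAt_const (-Λ) (0 : Fin d → ℝ)).add
        (((2⁻¹:ℝ) • (Tmap A + (Tmap A).flip)).hasFDerivAt (x := (0 : Fin d → ℝ)))
    rw [haff.fderiv]
    apply ContinuousLinearMap.ext; intro z
    apply ContinuousLinearMap.ext; intro w
    simp only [ContinuousLinearMap.smul_apply, ContinuousLinearMap.add_apply,
      ContinuousLinearMap.flip_apply]
    rw [Tmap_symm A w z]
    have : Tmap A z w + Tmap A z w = (2:ℝ) • Tmap A z w := by rw [two_smul]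
    rw [this, smul_smul]
    norm_num
  set F0 := fun z => Ψ z - P z with hF0
  have hPsm : ContDiff ℝ ∞ P := by
    refine ContDiff.add (ContDiff.sub contDiff_const (Λ.contDiff)) ?_
    exact (((Tmap A).isBoundedBilinearMap.contDiff).comp (contDiff_id.prodMk contDiff_id)).const_smul _
  have hFsm : ContDiff ℝ ∞ F0 := (hΨ.of_le (by simp)).sub hPsm
  have h00 : F0 0 = 0 := by simp [hF0, hP]
  have h1 : fderiv ℝ F0 0 = 0 := by
    rw [hF0, fderiv_fun_sub (hΨdiff 0) (hPd 0).differentiableAt, hfdΨ0, (hPd 0).fderiv]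
    simp
  have hfdF0 : fderiv ℝ F0 = fun w => fderiv ℝ Ψ w - fderiv ℝ P w :=
    funext fun w => fderiv_fun_sub (hΨdiff w) (hPd w).differentiableAt
  have h2 : fderiv ℝ (fderiv ℝ F0) 0 = 0 := by
    have hdP : DifferentiableAt ℝ (fderiv ℝ P) 0 := by
      rw [hfdP]
      exact ((hasFDerivAt_const _ _).add (ContinuousLinearMap.hasFDerivAt _)).differentiableAt
    rw [hfdF0, fderiv_fun_sub ((hΨ1.differentiable (by simp)) 0) hdP]
    rw [sndPsi A hA Ψ hΨ hΨ0 hODE, hsndP]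
    simp
  have hO : F0 =O[nhds 0] fun z => ‖z‖ ^ 3 := isBigO_cube_of_jets hFsm h00 h1 h2
  have hgoal : (fun z : Fin d → ℝ => Ψ z - fun i j =>
        (if i = j then (1 : ℝ) else 0)
          - ∑ j', z j' * A 0 (Pi.single j' 1) i j
          + (1 / 2) * ∑ i', ∑ j', z i' * z j' *
              ∑ k, A 0 (Pi.single j' 1) i k * A 0 (Pi.single i' 1) k j
          - (1 / 2) * ∑ i', ∑ j', z i' * z j' *
              fderiv ℝ (fun w => A w (Pi.single j' 1)) 0 (Pi.single i' 1) i j) = F0 := by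
    funext z
    rw [hF0]
    congr 1
    funext i j
    rw [rep1 A z i j, ← rep2 A z i j, ← rep3 A hA z i j]
    have hPzij : P z i j = Ψ 0 i j - Λ z i j
        + 2⁻¹ * (matmulCLM N (A 0 z) (A 0 z) i j
          - fderiv ℝ (fun w => (A w).toContinuousLinearMap) 0 z z i j) := by
      rw [hP]
      simp only [Pi.add_apply, Pi.sub_apply, Pi.smul_apply, smul_eq_mul, Tmap_diag]
    rw [hPzij, hΨ0]
    simp only [hΛ, LinearMap.coe_toContinuousLinearMap']
    ring
  rw [hgoal]
  exact hO
end final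

end RayODEAux

open Asymptotics

/-- Second-order Taylor expansion at `0` of the solution `Ψ` of the ray ODE
`(d/dt) Ψ(tz) + A(tz)(z) Ψ(tz) = 0`, `Ψ(0) = I`:
`Ψ(z) = I − ∑ⱼ zⱼ Aⱼ(0) + ½ ∑ᵢⱼ zᵢzⱼ Aⱼ(0)Aᵢ(0) − ½ ∑ᵢⱼ zᵢzⱼ ∂ᵢAⱼ(0) + O(|z|³)`. -/
theorem rayODE_taylor_two {d N : ℕ}
    (A : (Fin d → ℝ) → (Fin d → ℝ) →ₗ[ℝ] (Fin N → Fin N → ℝ))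
    (hA : ContDiff ℝ (⊤ : ℕ∞) (fun p : (Fin d → ℝ) × (Fin d → ℝ) => A p.1 p.2))
    (Ψ : (Fin d → ℝ) → (Fin N → Fin N → ℝ)) (hΨ : ContDiff ℝ (⊤ : ℕ∞) Ψ)
    (hΨ0 : Ψ 0 = fun i j => if i = j then (1 : ℝ) else 0)
    (hODE : ∀ (z : Fin d → ℝ) (t : ℝ),
      deriv (fun t => Ψ (t • z)) t +
        (fun i j => ∑ k, A (t • z) z i k * Ψ (t • z) k j) = 0) :
    (fun z : Fin d → ℝ => Ψ z - fun i j =>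
        (if i = j then (1 : ℝ) else 0)
          - ∑ j', z j' * A 0 (Pi.single j' 1) i j
          + (1 / 2) * ∑ i', ∑ j', z i' * z j' *
              ∑ k, A 0 (Pi.single j' 1) i k * A 0 (Pi.single i' 1) k j
          - (1 / 2) * ∑ i', ∑ j', z i' * z j' *
              fderiv ℝ (fun w => A w (Pi.single j' 1)) 0 (Pi.single i' 1) i j)
      =O[nhds 0] fun z => ‖z‖ ^ 3 :=
  RayODEAux.rayODE_taylor_two' A hA Ψ hΨ hΨ0 hODE
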